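/- For an exponential correlation matrix R ∈ ℂ^{M×M} with entries [R]_{ij} = r^{j−i} for i ≤ j and (r^{i−j})* for i > j, where r ∈ ℂ with |r| < 1, R is Hermitian positive definite. -/

import Mathlib

open MeasureTheory ProbabilityTheory

noncomputable section

instance euclideanComplex.measurableSpace {M : ℕ} :
    MeasurableSpace (EuclideanSpace ℂ (Fin M)) :=
    MeasurableSpace.comap WithLp.ofLp MeasurableSpace.pi

instance euclideanComplex.borelSpace {M : ℕ} :
    BorelSpace (EuclideanSpace ℂ (Fin M)) := PiLp.borelSpace 2

/-- Circularly symmetric complex Gaussian law on `ℂ` with mean `m` and variance `v`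
(real and imaginary parts independent, each of variance `v/2`). -/
def complexGaussian (m : ℂ) (v : ℝ) : Measure ℂ :=
  Measure.map (fun p : ℝ × ℝ => (p.1 : ℂ) + (p.2 : ℂ) * Complex.I)
    ((gaussianReal m.re (v / 2).toNNReal).prod (gaussianReal m.im (v / 2).toNNReal))

/-- Complex Gaussian law `CN(μ, v I_M)` on `ℂ^M` with independent entries. -/
def complexGaussianVec {M : ℕ} (μ : EuclideanSpace ℂ (Fin M)) (v : ℝ) :
    Measure (EuclideanSpace ℂ (Fin M)) :=
  Measure.map (fun f : Fin M → ℂ => (EuclideanSpace.equiv (Fin M) ℂ).symm f)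
    (Measure.pi fun i => complexGaussian (μ i) v)

/-- Modified Bessel function of the first kind of integer order `n`. -/
def besselI (n : ℕ) (x : ℝ) : ℝ :=
  ∑' k : ℕ, x ^ (2 * k + n) / (2 ^ (2 * k + n) * k.factorial * (k + n).factorial)

/-- Marcum-Q function of order `M` (continuously extended to `a = 0`). -/
def marcumQ (M : ℕ) (a b : ℝ) : ℝ :=
  if a = 0 then
    ∫ x in Set.Ioi b, x ^ (2 * M - 1) * Real.exp (-x ^ 2 / 2) /
      (2 ^ (M - 1) * (M - 1).factorial)
  else
    ∫ x in Set.Ioi b, x * (x / a) ^ (M - 1) * Real.exp (-(x ^ 2 + a ^ 2) / 2) *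
      besselI (M - 1) (a * x)

/-- `ν` is a noncentral chi-square distribution with (even) `dof` degrees of freedom
and noncentrality parameter `lam`, characterized through its CDF via the Marcum-Q function. -/
def IsNoncentralChiSquare (ν : Measure ℝ) (dof : ℕ) (lam : ℝ) : Prop :=
  ∀ t : ℝ, 0 ≤ t → (ν (Set.Iic t)).toReal = 1 - marcumQ (dof / 2) (Real.sqrt lam) (Real.sqrt t)

/-- Lower incomplete gamma function `γ(s, x)`. -/
def lowerGamma (s x : ℝ) : ℝ := ∫ t in Set.Ioc 0 x, t ^ (s - 1) * Real.exp (-t)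

/-- Upper incomplete gamma function `Γ(s, x)`. -/
def upperGamma (s x : ℝ) : ℝ := ∫ t in Set.Ioi x, t ^ (s - 1) * Real.exp (-t)

/-- The `k`-th Laguerre polynomial. -/
def laguerre (k : ℕ) (x : ℝ) : ℝ :=
  ∑ j ∈ Finset.range (k + 1), (k.choose j : ℝ) * (-x) ^ j / j.factorial

open scoped ComplexOrder

private lemma kms_real_sum (a2 : ℝ) (n : ℕ) :
    ∑ t ∈ Finset.range (n + 1), (if t = 0 then 1 else (1 - a2)) * a2 ^ (n - t) = 1 := by
  induction n with
  | zero => simp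
  | succ n ih =>
    rw [Finset.sum_range_succ]
    have h : ∑ t ∈ Finset.range (n + 1), (if t = 0 then 1 else (1 - a2)) * a2 ^ (n + 1 - t)
        = a2 * ∑ t ∈ Finset.range (n + 1), (if t = 0 then 1 else (1 - a2)) * a2 ^ (n - t) := by
      rw [Finset.mul_sum]
      refine Finset.sum_congr rfl fun t ht => ?_
      have ht' : t ≤ n := Nat.lt_succ_iff.mp (Finset.mem_range.mp ht)
      have he : n + 1 - t = (n - t) + 1 := by omega
      rw [he, pow_succ]
      ring
    rw [h, ih]
    simp

private lemma kms_posDef_conjTranspose_mul_self {M : ℕ} (A : Matrix (Fin M) (Fin M) ℂ)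
    (h : ∀ x : Fin M → ℂ, A.mulVec x = 0 → x = 0) : (A.conjTranspose * A).PosDef := by
  refine Matrix.PosDef.of_dotProduct_mulVec_pos (Matrix.isHermitian_conjTranspose_mul_self _) fun x hx => ?_
  rw [← Matrix.mulVec_mulVec, Matrix.dotProduct_mulVec, Matrix.vecMul_conjTranspose, star_star]
  exact Matrix.dotProduct_star_self_pos_iff.mpr fun h0 => hx (h x h0)

/-- The exponential (Kac–Murdock–Szegő) correlation matrix with
`[R]_{ij} = r^{j−i}` for `i ≤ j` and `(r^{i−j})^*` for `i > j`, `|r| < 1`, is Hermitian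
positive definite. -/
theorem exponential_correlation_posdef (M : ℕ) (hM : 1 ≤ M) (r : ℂ)
    (hr : ‖r‖ < 1) :
    (Matrix.of fun i j : Fin M =>
      if (i : ℕ) ≤ (j : ℕ) then r ^ ((j : ℕ) - (i : ℕ))
      else (starRingEnd ℂ) (r ^ ((i : ℕ) - (j : ℕ)))).PosDef := by
  classical
  set a : ℝ := ‖r‖ with ha_def
  have ha0 : 0 ≤ a := norm_nonneg r
  have ha2 : a ^ 2 < 1 := by nlinarith
  have h1a : (0:ℝ) < 1 - a ^ 2 := by linarith
  set c : ℕ → ℝ := fun t => if t = 0 then 1 else Real.sqrt (1 - a ^ 2) with hc_def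
  have hc2 : ∀ t, (c t) ^ 2 = if t = 0 then 1 else 1 - a ^ 2 := by
    intro t
    by_cases h : t = 0 <;> simp [hc_def, h, Real.sq_sqrt h1a.le]
  have hcpos : ∀ t, 0 < c t := by
    intro t
    by_cases h : t = 0 <;> simp [hc_def, h, Real.sqrt_pos.mpr h1a]
  set A : Matrix (Fin M) (Fin M) ℂ := Matrix.of fun t j : Fin M =>
    if (t : ℕ) ≤ (j : ℕ) then ((c (t : ℕ) : ℝ) : ℂ) * r ^ ((j : ℕ) - (t : ℕ)) else 0 with hA_def
  -- key entrywise computation for i ≤ j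
  have key : ∀ i j : Fin M, (i : ℕ) ≤ (j : ℕ) →
      ∑ t : Fin M, (starRingEnd ℂ) (A t i) * A t j = r ^ ((j : ℕ) - (i : ℕ)) := by
    intro i j hij
    set f : ℕ → ℂ := fun t =>
      (if t ≤ (i : ℕ) then ((c t : ℝ) : ℂ) * ((starRingEnd ℂ) r) ^ ((i : ℕ) - t) else 0) *
      (if t ≤ (j : ℕ) then ((c t : ℝ) : ℂ) * r ^ ((j : ℕ) - t) else 0) with hf_def
    have step1 : ∑ t : Fin M, (starRingEnd ℂ) (A t i) * A t j = ∑ t ∈ Finset.range M, f t := by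
      rw [← Fin.sum_univ_eq_sum_range f M]
      refine Finset.sum_congr rfl fun t _ => ?_
      simp only [hA_def, hf_def, Matrix.of_apply, apply_ite (starRingEnd ℂ), map_mul, map_pow,
        Complex.conj_ofReal, map_zero]
    have step2 : ∑ t ∈ Finset.range M, f t = ∑ t ∈ Finset.range ((i : ℕ) + 1), f t := by
      refine (Finset.sum_subset ?_ ?_).symm
      · intro t ht
        have := Finset.mem_range.mp ht
        exact Finset.mem_range.mpr (by omega)
      · intro t _ ht
        have : ¬ t ≤ (i : ℕ) := by
          simpa using ht
        simp [hf_def, this]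
    have step3 : ∑ t ∈ Finset.range ((i : ℕ) + 1), f t =
        ∑ t ∈ Finset.range ((i : ℕ) + 1),
          ((((if t = 0 then 1 else 1 - a ^ 2) * (a ^ 2) ^ ((i : ℕ) - t) : ℝ)) : ℂ) *
            r ^ ((j : ℕ) - (i : ℕ)) := by
      refine Finset.sum_congr rfl fun t ht => ?_
      have hti : t ≤ (i : ℕ) := Nat.lt_succ_iff.mp (Finset.mem_range.mp ht)
      have htj : t ≤ (j : ℕ) := le_trans hti hij
      have he : (j : ℕ) - t = ((i : ℕ) - t) + ((j : ℕ) - (i : ℕ)) := by omega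
      have hconj : ((starRingEnd ℂ) r) ^ ((i : ℕ) - t) * r ^ ((i : ℕ) - t)
          = ((a : ℂ) ^ 2) ^ ((i : ℕ) - t) := by
        rw [← mul_pow, mul_comm, Complex.mul_conj, Complex.normSq_eq_norm_sq, ha_def]
        push_cast
        ring
      rw [hf_def]
      simp only [hti, htj, if_true]
      rw [he, pow_add, ← hc2 t]
      push_cast
      rw [← hconj]
      ring
    have step4 : (∑ t ∈ Finset.range ((i : ℕ) + 1),
          ((((if t = 0 then 1 else 1 - a ^ 2) * (a ^ 2) ^ ((i : ℕ) - t) : ℝ)) : ℂ) *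
            r ^ ((j : ℕ) - (i : ℕ))) = r ^ ((j : ℕ) - (i : ℕ)) := by
      rw [← Finset.sum_mul, ← Complex.ofReal_sum, kms_real_sum]
      simp
    rw [step1, step2, step3, step4]
  -- factorization
  have hfact : A.conjTranspose * A = (Matrix.of fun i j : Fin M =>
      if (i : ℕ) ≤ (j : ℕ) then r ^ ((j : ℕ) - (i : ℕ))
      else (starRingEnd ℂ) (r ^ ((i : ℕ) - (j : ℕ)))) := by
    ext i j
    rw [Matrix.mul_apply]
    simp only [Matrix.conjTranspose_apply, Matrix.of_apply]
    by_cases hij : (i : ℕ) ≤ (j : ℕ)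
    · simp only [hij, if_true]
      simpa using key i j hij
    · simp only [hij, if_false]
      have hji : (j : ℕ) ≤ (i : ℕ) := by omega
      have := key j i hji
      calc ∑ t : Fin M, star (A t i) * A t j
          = (starRingEnd ℂ) (∑ t : Fin M, (starRingEnd ℂ) (A t j) * A t i) := by
            rw [map_sum]
            refine Finset.sum_congr rfl fun t _ => ?_
            rw [map_mul, Complex.conj_conj, RCLike.star_def]
            ring
        _ = (starRingEnd ℂ) (r ^ ((i : ℕ) - (j : ℕ))) := by rw [this]
  -- injectivity of A
  have hdiag : ∀ t : Fin M, A t t = ((c (t : ℕ) : ℝ) : ℂ) := by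
    intro t; simp [hA_def]
  have hdet : A.det ≠ 0 := by
    have htri : A.BlockTriangular id := by
      intro t s hst
      have h2 : ¬ (t : ℕ) ≤ (s : ℕ) := not_le.mpr (Fin.lt_iff_val_lt_val.mp hst)
      simp only [hA_def, Matrix.of_apply]
      exact if_neg h2
    rw [Matrix.det_of_upperTriangular htri]
    refine Finset.prod_ne_zero_iff.mpr fun t _ => ?_
    rw [hdiag t]
    exact_mod_cast (hcpos (t : ℕ)).ne'
  have hinj : ∀ x : Fin M → ℂ, A.mulVec x = 0 → x = 0 := by
    intro x hx
    have hu : IsUnit A := (Matrix.isUnit_iff_isUnit_det A).mpr (isUnit_iff_ne_zero.mpr hdet)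
    have := Matrix.mulVec_injective_iff_isUnit.mpr hu
    exact this (by simpa using hx)
  exact hfact ▸ kms_posDef_conjTranspose_mul_self A hinj
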